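/- arXiv:2309.07261 — 2 statements merged into one kernel-verified Lean document; each statement's English description precedes it below -/
import Mathlib

section
/- Let R ⊆ ℝ be an open interval and A : ℝ → ℝ be twice differentiable on R with A''(θ) ≤ κ₂ < ∞ for all θ ∈ R. Let Y, Θ₁, Θ₂ ∈ ℝ^{n×p} with all entries of Θ₁ and Θ₂ in R, and let r₁ = rank(Θ₁), r₂ = rank(Θ₂). Then L(Θ₂) − L(Θ₁) ≤ (√(r₁+r₂)/n) · ‖Y − A'(Θ₁)‖_op · ‖Θ₁ − Θ₂‖_F + (κ₂/(2n)) · ‖Θ₁ − Θ₂‖_F². (Second inequality of Lemma B.1.) -/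
/-! With `Δ = Θ₁ - Θ₂`, `n (L(Θ₂) - L(Θ₁))` splits into the linear term `⟨Y - A'(Θ₁), Δ⟩` and the
entrywise second-order Taylor remainders of `A`, each at most `κ₂/2` times the squared entry
because `t ↦ κ₂ t² / 2 - A t` is convex and so lies above its tangents.

For the linear term, the columns of `Δ` lie in its column space `U`, of dimension
`rank Δ ≤ r₁ + r₂`. Replacing the columns of `M = Y - A'(Θ₁)` by their orthogonal projections onto
`U` and applying Cauchy–Schwarz gives `⟨M, Δ⟩ ≤ ‖P_U M‖_F ‖Δ‖_F`, and over an orthonormal basis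
`(b_k)` of `U`, `‖P_U M‖_F² = ∑ₖ ‖Mᵀ b_k‖² ≤ rank Δ · ‖M‖²_op`. -/

open Matrix MeasureTheory
open scoped BigOperators ENNReal

noncomputable def opNorm {m n : ℕ} (M : Matrix (Fin m) (Fin n) ℝ) : ℝ :=
  ‖LinearMap.toContinuousLinearMap (Matrix.toEuclideanLin M)‖

noncomputable def frobNorm {m n : ℕ} (M : Matrix (Fin m) (Fin n) ℝ) : ℝ :=
  Real.sqrt (∑ i, ∑ j, (M i j) ^ 2)

noncomputable def euclNorm {k : ℕ} (v : Fin k → ℝ) : ℝ :=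
  Real.sqrt (∑ i, (v i) ^ 2)

noncomputable def proj {p r : ℕ} (Γ : Matrix (Fin p) (Fin r) ℝ) : Matrix (Fin p) (Fin p) ℝ :=
  Γ * (Γᵀ * Γ)⁻¹ * Γᵀ

noncomputable def nthLargestEigenvalue {p : ℕ} (M : Matrix (Fin p) (Fin p) ℝ) (k : ℕ) : ℝ :=
  if h : M.IsHermitian then (List.insertionSort (· ≥ ·) (List.ofFn h.eigenvalues)).getD (k - 1) 0
  else 0

noncomputable def negLogLik {n p : ℕ} (A : ℝ → ℝ)
    (Y Θ : Matrix (Fin n) (Fin p) ℝ) : ℝ :=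
  (1 / (n : ℝ)) * (-(Yᵀ * Θ).trace + ∑ i, ∑ j, A (Θ i j))

open scoped RealInnerProductSpace Matrix.Norms.L2Operator

section InnerProduct

variable {E ι : Type*} [NormedAddCommGroup E] [InnerProductSpace ℝ E] [Fintype ι]

theorem OrthonormalBasis.norm_sq_starProjection {κ : Type*} [Fintype κ]
    {U : Submodule ℝ E} [U.HasOrthogonalProjection] (b : OrthonormalBasis κ ℝ U) (x : E) :
    ‖U.starProjection x‖ ^ 2 = ∑ k, ⟪(b k : E), x⟫ ^ 2 := by
  rw [U.starProjection_apply, Submodule.norm_coe, ← b.sum_sq_inner_right]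
  simp

theorem sum_inner_le_sqrt_sum_norm_sq_starProjection (U : Submodule ℝ E)
    [U.HasOrthogonalProjection] (m d : ι → E) (hd : ∀ j, d j ∈ U) :
    ∑ j, ⟪m j, d j⟫ ≤ √(∑ j, ‖U.starProjection (m j)‖ ^ 2) * √(∑ j, ‖d j‖ ^ 2) := by
  calc ∑ j, ⟪m j, d j⟫ = ∑ j, ⟪U.starProjection (m j), d j⟫ := by
        refine Finset.sum_congr rfl fun j _ => ?_
        rw [U.inner_starProjection_left_eq_right, U.starProjection_eq_self_iff.mpr (hd j)]
    _ ≤ ∑ j, ‖U.starProjection (m j)‖ * ‖d j‖ :=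
        Finset.sum_le_sum fun j _ => real_inner_le_norm _ _
    _ ≤ _ := Real.sum_mul_le_sqrt_mul_sqrt _ _ _

theorem sum_norm_sq_starProjection_le (U : Submodule ℝ E) [FiniteDimensional ℝ U]
    (m : ι → E) {C : ℝ} (hC : ∀ u, ∑ j, ⟪u, m j⟫ ^ 2 ≤ C * ‖u‖ ^ 2) :
    ∑ j, ‖U.starProjection (m j)‖ ^ 2 ≤ Module.finrank ℝ U * C := by
  let b := stdOrthonormalBasis ℝ U
  calc ∑ j, ‖U.starProjection (m j)‖ ^ 2 = ∑ k, ∑ j, ⟪(b k : E), m j⟫ ^ 2 := by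
        simp_rw [b.norm_sq_starProjection]
        exact Finset.sum_comm
    _ ≤ ∑ _k : Fin (Module.finrank ℝ U), C := by
        refine Finset.sum_le_sum fun k _ => (hC _).trans_eq ?_
        rw [Submodule.norm_coe, b.orthonormal.1 k, one_pow, mul_one]
    _ = Module.finrank ℝ U * C := by simp

theorem sum_inner_le_sqrt_finrank_mul (U : Submodule ℝ E) [FiniteDimensional ℝ U]
    (m d : ι → E) (hd : ∀ j, d j ∈ U) {C : ℝ} (hC : ∀ u, ∑ j, ⟪u, m j⟫ ^ 2 ≤ C * ‖u‖ ^ 2) :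
    ∑ j, ⟪m j, d j⟫ ≤ √(Module.finrank ℝ U * C) * √(∑ j, ‖d j‖ ^ 2) :=
  (sum_inner_le_sqrt_sum_norm_sq_starProjection U m d hd).trans <| by
    gcongr
    exact sum_norm_sq_starProjection_le U m hC

end InnerProduct

namespace Matrix

theorem finrank_range_toEuclideanLin {m n 𝕜 : Type*} [Fintype m] [Fintype n] [DecidableEq n]
    [RCLike 𝕜] (M : Matrix m n 𝕜) :
    Module.finrank 𝕜 (LinearMap.range (toEuclideanLin M)) = M.rank := by
  rw [toEuclideanLin_eq_toLin_orthonormal, M.rank_eq_finrank_range_toLin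
    (EuclideanSpace.basisFun m 𝕜).toBasis (EuclideanSpace.basisFun n 𝕜).toBasis]

theorem toLp_col_mem_range_toEuclideanLin {m n 𝕜 : Type*} [Fintype n] [DecidableEq n] [RCLike 𝕜]
    (M : Matrix m n 𝕜) (j : n) : WithLp.toLp 2 (M.col j) ∈ LinearMap.range (toEuclideanLin M) :=
  ⟨EuclideanSpace.single j 1, by ext i; simp [toLpLin_apply]⟩

theorem rank_sub_le {m n K : Type*} [Fintype n] [Field K] (A B : Matrix m n K) :
    (A - B).rank ≤ A.rank + B.rank := by
  have hrange : LinearMap.range (A - B).mulVecLin ≤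
      LinearMap.range A.mulVecLin ⊔ LinearMap.range B.mulVecLin := by
    rintro _ ⟨v, rfl⟩
    rw [mulVecLin_apply, sub_mulVec]
    exact sub_mem (Submodule.mem_sup_left ⟨v, rfl⟩) (Submodule.mem_sup_right ⟨v, rfl⟩)
  exact (Submodule.finrank_mono hrange).trans (Submodule.finrank_add_le_finrank_add_finrank _ _)

end Matrix

section MatrixNorms

variable {m n : ℕ}

theorem opNorm_eq_l2_opNorm (M : Matrix (Fin m) (Fin n) ℝ) : opNorm M = ‖M‖ := rfl

theorem opNorm_nonneg (M : Matrix (Fin m) (Fin n) ℝ) : 0 ≤ opNorm M := norm_nonneg _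

theorem frobNorm_sq (M : Matrix (Fin m) (Fin n) ℝ) : frobNorm M ^ 2 = ∑ i, ∑ j, M i j ^ 2 :=
  Real.sq_sqrt (by positivity)

theorem sum_inner_toLp_col_sq_le (M : Matrix (Fin m) (Fin n) ℝ) (u : EuclideanSpace ℝ (Fin m)) :
    ∑ j, ⟪u, WithLp.toLp 2 (M.col j)⟫ ^ 2 ≤ opNorm M ^ 2 * ‖u‖ ^ 2 := by
  have hcol : ∀ j, ⟪u, WithLp.toLp 2 (M.col j)⟫ = (Mᴴ *ᵥ u.ofLp) j := fun j => by
    simp [EuclideanSpace.inner_eq_star_dotProduct, mulVec, dotProduct]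
  calc ∑ j, ⟪u, WithLp.toLp 2 (M.col j)⟫ ^ 2
      = ‖(EuclideanSpace.equiv (Fin n) ℝ).symm (Mᴴ *ᵥ u.ofLp)‖ ^ 2 := by
        simp [hcol, EuclideanSpace.real_norm_sq_eq]
    _ ≤ (‖Mᴴ‖ * ‖u‖) ^ 2 := by gcongr; exact l2_opNorm_mulVec Mᴴ u
    _ = opNorm M ^ 2 * ‖u‖ ^ 2 := by rw [l2_opNorm_conjTranspose, opNorm_eq_l2_opNorm, mul_pow]

theorem sum_mul_le_sqrt_rank_mul_opNorm_mul_frobNorm (M Δ : Matrix (Fin m) (Fin n) ℝ) :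
    ∑ i, ∑ j, M i j * Δ i j ≤ √(Δ.rank : ℝ) * opNorm M * frobNorm Δ := by
  have key := sum_inner_le_sqrt_finrank_mul (LinearMap.range (toEuclideanLin Δ))
    (fun j => WithLp.toLp 2 (M.col j)) (fun j => WithLp.toLp 2 (Δ.col j))
    (toLp_col_mem_range_toEuclideanLin Δ) (sum_inner_toLp_col_sq_le M)
  have hfrob : ∑ j, ‖WithLp.toLp 2 (Δ.col j)‖ ^ 2 = ∑ i, ∑ j, Δ i j ^ 2 := by
    simp only [EuclideanSpace.real_norm_sq_eq]
    exact Finset.sum_comm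
  rw [finrank_range_toEuclideanLin, Real.sqrt_mul (Nat.cast_nonneg _),
    Real.sqrt_sq (opNorm_nonneg M), hfrob] at key
  calc ∑ i, ∑ j, M i j * Δ i j = ∑ j, ⟪WithLp.toLp 2 (M.col j), WithLp.toLp 2 (Δ.col j)⟫ := by
        simp only [EuclideanSpace.inner_toLp_toLp, dotProduct, col_apply, star_trivial, mul_comm]
        exact Finset.sum_comm
    _ ≤ _ := key

end MatrixNorms

theorem ConvexOn.add_mul_sub_le_of_hasDerivAt {S : Set ℝ} {f : ℝ → ℝ} {f' x y : ℝ}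
    (hf : ConvexOn ℝ S f) (hx : x ∈ S) (hy : y ∈ S) (hfx : HasDerivAt f f' x) :
    f x + f' * (y - x) ≤ f y := by
  rcases lt_trichotomy x y with hxy | rfl | hyx
  · have := hf.le_slope_of_hasDerivAt hx hy hxy hfx
    rw [slope_def_field, le_div_iff₀ (sub_pos.mpr hxy)] at this
    linarith
  · simp
  · have := hf.slope_le_of_hasDerivAt hy hx hyx hfx
    rw [slope_def_field, div_le_iff₀ (sub_pos.mpr hyx)] at this
    linarith

theorem sub_sub_mul_le_of_hasDerivAt2_le {R : Set ℝ} (hR : Convex ℝ R)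
    {f f' f'' : ℝ → ℝ} (hf : ∀ t ∈ R, HasDerivAt f (f' t) t)
    (hf' : ∀ t ∈ R, HasDerivAt f' (f'' t) t) {κ : ℝ} (hκ : ∀ t ∈ R, f'' t ≤ κ)
    {x y : ℝ} (hx : x ∈ R) (hy : y ∈ R) :
    f y - f x - f' x * (y - x) ≤ κ / 2 * (y - x) ^ 2 := by
  have hg : ∀ t ∈ R, HasDerivAt (fun t => κ / 2 * t ^ 2 - f t) (κ * t - f' t) t := fun t ht =>
    (((hasDerivAt_pow 2 t).const_mul (κ / 2)).sub (hf t ht)).congr_deriv (by ring)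
  have hg' : ∀ t ∈ R, HasDerivAt (fun t => κ * t - f' t) (κ - f'' t) t := fun t ht =>
    (((hasDerivAt_id' t).const_mul κ).sub (hf' t ht)).congr_deriv (by ring)
  have hconvex : ConvexOn ℝ R (fun t => κ / 2 * t ^ 2 - f t) :=
    convexOn_of_hasDerivWithinAt2_nonneg hR
      (fun t ht => (hg t ht).continuousAt.continuousWithinAt)
      (fun t ht => (hg t (interior_subset ht)).hasDerivWithinAt)
      (fun t ht => (hg' t (interior_subset ht)).hasDerivWithinAt)
      (fun t ht => sub_nonneg.mpr (hκ t (interior_subset ht)))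
  have := hconvex.add_mul_sub_le_of_hasDerivAt hx hy (hg x hx)
  linarith

theorem sum_sub_sub_mul_le_half_mul_frobNorm_sq {n p : ℕ} {R : Set ℝ} (hR : Convex ℝ R)
    {f f' f'' : ℝ → ℝ} (hf : ∀ t ∈ R, HasDerivAt f (f' t) t)
    (hf' : ∀ t ∈ R, HasDerivAt f' (f'' t) t) {κ : ℝ} (hκ : ∀ t ∈ R, f'' t ≤ κ)
    {Θ₁ Θ₂ : Matrix (Fin n) (Fin p) ℝ} (hΘ₁ : ∀ i j, Θ₁ i j ∈ R) (hΘ₂ : ∀ i j, Θ₂ i j ∈ R) :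
    ∑ i, ∑ j, (f (Θ₂ i j) - f (Θ₁ i j) - f' (Θ₁ i j) * (Θ₂ i j - Θ₁ i j)) ≤
      κ / 2 * frobNorm (Θ₁ - Θ₂) ^ 2 := by
  simp_rw [frobNorm_sq, Finset.mul_sum, Matrix.sub_apply, sub_sq_comm (Θ₁ _ _)]
  exact Finset.sum_le_sum fun i _ => Finset.sum_le_sum fun j _ =>
    sub_sub_mul_le_of_hasDerivAt2_le hR hf hf' hκ (hΘ₁ i j) (hΘ₂ i j)

theorem negLogLik_sub_negLogLik {n p : ℕ} (A A' : ℝ → ℝ) (Y Θ₁ Θ₂ : Matrix (Fin n) (Fin p) ℝ) :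
    negLogLik A Y Θ₂ - negLogLik A Y Θ₁ =
      1 / n * (∑ i, ∑ j, (Y i j - A' (Θ₁ i j)) * (Θ₁ i j - Θ₂ i j) +
        ∑ i, ∑ j, (A (Θ₂ i j) - A (Θ₁ i j) - A' (Θ₁ i j) * (Θ₂ i j - Θ₁ i j))) := by
  have htrace : ∀ Θ : Matrix (Fin n) (Fin p) ℝ, (Yᵀ * Θ).trace = ∑ i, ∑ j, Y i j * Θ i j :=
    fun Θ => by
      simp only [trace, diag, mul_apply, transpose_apply]
      exact Finset.sum_comm
  simp only [negLogLik, htrace, ← mul_sub, ← Finset.sum_add_distrib, ← Finset.sum_sub_distrib,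
    ← Finset.sum_neg_distrib]
  congr 1
  exact Finset.sum_congr rfl fun i _ => Finset.sum_congr rfl fun j _ => by ring

theorem stmt7_general {n p : ℕ} (R : Set ℝ) (hRconv : Convex ℝ R)
    (A A' A'' : ℝ → ℝ)
    (hA' : ∀ θ ∈ R, HasDerivAt A (A' θ) θ)
    (hA'' : ∀ θ ∈ R, HasDerivAt A' (A'' θ) θ)
    (κ₂ : ℝ) (hκ₂le : ∀ θ ∈ R, A'' θ ≤ κ₂)
    (Y Θ₁ Θ₂ : Matrix (Fin n) (Fin p) ℝ)
    (hΘ₁ : ∀ i j, Θ₁ i j ∈ R) (hΘ₂ : ∀ i j, Θ₂ i j ∈ R) :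
    negLogLik A Y Θ₂ - negLogLik A Y Θ₁ ≤
      (Real.sqrt ((Θ₁.rank : ℝ) + (Θ₂.rank : ℝ)) / (n : ℝ)) *
          opNorm (Y - Matrix.of fun i j => A' (Θ₁ i j)) * frobNorm (Θ₁ - Θ₂) +
        (κ₂ / (2 * (n : ℝ))) * frobNorm (Θ₁ - Θ₂) ^ 2 := by
  have hlinear : ∑ i, ∑ j, (Y i j - A' (Θ₁ i j)) * (Θ₁ i j - Θ₂ i j) ≤
      √((Θ₁.rank : ℝ) + Θ₂.rank) * opNorm (Y - of fun i j => A' (Θ₁ i j)) *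
        frobNorm (Θ₁ - Θ₂) := by
    refine (sum_mul_le_sqrt_rank_mul_opNorm_mul_frobNorm (Y - of fun i j => A' (Θ₁ i j))
      (Θ₁ - Θ₂)).trans ?_
    gcongr
    · exact Real.sqrt_nonneg _
    · exact opNorm_nonneg _
    · exact_mod_cast Θ₁.rank_sub_le Θ₂
  rw [negLogLik_sub_negLogLik A A']
  calc _ ≤ 1 / n * (√((Θ₁.rank : ℝ) + Θ₂.rank) * opNorm (Y - of fun i j => A' (Θ₁ i j)) *
        frobNorm (Θ₁ - Θ₂) + κ₂ / 2 * frobNorm (Θ₁ - Θ₂) ^ 2) := by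
        gcongr
        exact sum_sub_sub_mul_le_half_mul_frobNorm_sq hRconv hA' hA'' hκ₂le hΘ₁ hΘ₂
    _ = _ := by ring

/-- second inequality of Lemma B.1 (upper bound on the likelihood
difference, with curvature upper bound `κ₂`). -/
theorem stmt7 {n p : ℕ} (R : Set ℝ) (hRopen : IsOpen R) (hRconv : Convex ℝ R)
    (A A' A'' : ℝ → ℝ)
    (hA' : ∀ θ ∈ R, HasDerivAt A (A' θ) θ)
    (hA'' : ∀ θ ∈ R, HasDerivAt A' (A'' θ) θ)
    (κ₂ : ℝ) (hκ₂le : ∀ θ ∈ R, A'' θ ≤ κ₂)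
    (Y Θ₁ Θ₂ : Matrix (Fin n) (Fin p) ℝ)
    (hΘ₁ : ∀ i j, Θ₁ i j ∈ R) (hΘ₂ : ∀ i j, Θ₂ i j ∈ R) :
    negLogLik A Y Θ₂ - negLogLik A Y Θ₁ ≤
      (Real.sqrt ((Θ₁.rank : ℝ) + (Θ₂.rank : ℝ)) / (n : ℝ)) *
          opNorm (Y - Matrix.of fun i j => A' (Θ₁ i j)) * frobNorm (Θ₁ - Θ₂) +
        (κ₂ / (2 * (n : ℝ))) * frobNorm (Θ₁ - Θ₂) ^ 2 :=
  stmt7_general R hRconv A A' A'' hA' hA'' κ₂ hκ₂le Y Θ₁ Θ₂ hΘ₁ hΘ₂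
end

section
/- Let W ∈ ℝ^{n×r} and G ∈ ℝ^{p×r} be matrices all of whose rows have Euclidean norm at most C, and suppose W Gᵀ = √(np)·U Σ Vᵀ where U ∈ ℝ^{n×r}, V ∈ ℝ^{p×r} satisfy UᵀU = VᵀV = I_r and Σ ∈ ℝ^{r×r} is diagonal with every diagonal entry at least 1/C_Σ for some C_Σ > 0. Then every row of Γ̂ := √p·V Σ^{1/2} has Euclidean norm at most C² √C_Σ. (Deterministic content of Lemma C.4 on the boundedness of the estimated latent loadings.) -/
open Matrix MeasureTheory
open scoped BigOperators ENNReal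

/-!
The `j`-th column of `W Gᵀ` is `W (G j)`; its entries are inner products of rows of norm at most
`C`, so its squared length is at most `n C⁴`. On the other hand it equals `√(np) U (Σ V_j)`, and `U`
is an isometry, so its squared length is `n p ‖Σ V_j‖²`. Hence `p ‖Σ V_j‖² ≤ C⁴`, and since
`σ ≤ C_Σ σ²` for every diagonal entry `σ ≥ 1/C_Σ`, the squared norm `p ∑ σ_k V_{jk}²` of the
`j`-th row of `Γ̂` is at most `C_Σ C⁴`.
-/

lemma euclNorm_le_iff {k : ℕ} (v : Fin k → ℝ) {b : ℝ} (hb : 0 ≤ b) :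
    euclNorm v ≤ b ↔ ∑ i, v i ^ 2 ≤ b ^ 2 :=
  Real.sqrt_le_left hb

lemma euclNorm_nonneg {k : ℕ} (v : Fin k → ℝ) : 0 ≤ euclNorm v :=
  Real.sqrt_nonneg _

lemma sq_euclNorm {k : ℕ} (v : Fin k → ℝ) : euclNorm v ^ 2 = ∑ i, v i ^ 2 :=
  Real.sq_sqrt (Finset.sum_nonneg fun i _ => sq_nonneg (v i))

section Isometry

variable {m n R : Type*} [Fintype m] [Fintype n] [DecidableEq n]

lemma card_le_card_of_transpose_mul_self_eq_one [CommRing R] [StrongRankCondition R]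
    {U : Matrix m n R} (hU : Uᵀ * U = 1) : Fintype.card n ≤ Fintype.card m :=
  calc Fintype.card n = (Uᵀ * U).rank := by rw [hU, rank_one]
    _ ≤ U.rank := rank_mul_le_right _ _
    _ ≤ Fintype.card m := rank_le_card_height U

lemma sum_sq_mulVec_of_transpose_mul_self_eq_one [CommSemiring R] {U : Matrix m n R}
    (hU : Uᵀ * U = 1) (x : n → R) : ∑ i, (U *ᵥ x) i ^ 2 = ∑ k, x k ^ 2 := by
  have h : (U *ᵥ x) ⬝ᵥ (U *ᵥ x) = x ⬝ᵥ x := by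
    rw [dotProduct_mulVec, ← mulVec_transpose, mulVec_mulVec, hU, one_mulVec]
  simpa only [dotProduct, sq] using h

end Isometry

lemma sum_sq_mulVec_le {m k : ℕ} {A : Matrix (Fin m) (Fin k) ℝ} {x : Fin k → ℝ} {a b : ℝ}
    (hA : ∀ i, euclNorm (A i) ≤ a) (hx : euclNorm x ≤ b) :
    ∑ i, (A *ᵥ x) i ^ 2 ≤ m * (a * b) ^ 2 := by
  have hentry : ∀ i, (A *ᵥ x) i ^ 2 ≤ (a * b) ^ 2 := fun i =>
    calc (A *ᵥ x) i ^ 2 ≤ (∑ l, A i l ^ 2) * ∑ l, x l ^ 2 :=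
          Finset.sum_mul_sq_le_sq_mul_sq Finset.univ (A i) x
      _ = (euclNorm (A i) * euclNorm x) ^ 2 := by rw [mul_pow, sq_euclNorm, sq_euclNorm]
      _ ≤ (a * b) ^ 2 := by
          have ha : 0 ≤ a := (euclNorm_nonneg _).trans (hA i)
          exact pow_le_pow_left₀ (mul_nonneg (euclNorm_nonneg _) (euclNorm_nonneg _))
            (mul_le_mul (hA i) hx (euclNorm_nonneg _) ha) 2
  simpa using Finset.sum_le_sum fun i (_ : i ∈ Finset.univ) => hentry i

lemma sum_mul_sq_le_mul_sum_sq {ι : Type*} [Fintype ι] {s x : ι → ℝ} {c : ℝ} (hc : 0 < c)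
    (hs : ∀ i, 1 / c ≤ s i) : ∑ i, s i * x i ^ 2 ≤ c * ∑ i, (s i * x i) ^ 2 := by
  rw [Finset.mul_sum]
  refine Finset.sum_le_sum fun i _ => ?_
  have hcs : 1 ≤ s i * c := (div_le_iff₀ hc).mp (hs i)
  have hsi : 0 ≤ s i := le_trans (by positivity) (hs i)
  nlinarith [mul_nonneg hsi (sq_nonneg (x i))]

lemma mul_sum_sq_mulVec_row_le_of_mul_transpose_eq {n p r : ℕ} {C : ℝ}
    {W : Matrix (Fin n) (Fin r) ℝ} {G : Matrix (Fin p) (Fin r) ℝ}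
    {U : Matrix (Fin n) (Fin r) ℝ} {V : Matrix (Fin p) (Fin r) ℝ} {S : Matrix (Fin r) (Fin r) ℝ}
    (hW : ∀ i, euclNorm (W i) ≤ C) (hG : ∀ j, euclNorm (G j) ≤ C) (hU : Uᵀ * U = 1)
    (hsvd : W * Gᵀ = Real.sqrt ((n : ℝ) * p) • (U * S * Vᵀ)) (j : Fin p) :
    p * ∑ k, (S *ᵥ V j) k ^ 2 ≤ (C * C) ^ 2 := by
  have hcol : W *ᵥ G j = Real.sqrt (n * p) • (U *ᵥ (S *ᵥ V j)) := by
    ext i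
    rw [mulVec_mulVec]
    exact congrFun (congrFun hsvd i) j
  have hcol_sq : (n : ℝ) * (p * ∑ k, (S *ᵥ V j) k ^ 2) ≤ n * (C * C) ^ 2 :=
    calc (n : ℝ) * (p * ∑ k, (S *ᵥ V j) k ^ 2) = ∑ i, (W *ᵥ G j) i ^ 2 := by
          simp only [hcol, Pi.smul_apply, smul_eq_mul, mul_pow, ← Finset.mul_sum,
            sum_sq_mulVec_of_transpose_mul_self_eq_one hU]
          rw [Real.sq_sqrt (by positivity), mul_assoc]
      _ ≤ n * (C * C) ^ 2 := sum_sq_mulVec_le hW (hG j)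
  rcases n.eq_zero_or_pos with rfl | hn
  · obtain rfl : r = 0 := by simpa using card_le_card_of_transpose_mul_self_eq_one hU
    simp only [Finset.univ_eq_empty, Finset.sum_empty, mul_zero]
    positivity
  · exact le_of_mul_le_mul_left hcol_sq (by exact_mod_cast hn)

theorem stmt14_general {n p r : ℕ} (C CS : ℝ) (hCS : 0 < CS)
    (W : Matrix (Fin n) (Fin r) ℝ) (G : Matrix (Fin p) (Fin r) ℝ)
    (hW : ∀ i, euclNorm (W i) ≤ C) (hG : ∀ j, euclNorm (G j) ≤ C)
    (U : Matrix (Fin n) (Fin r) ℝ) (V : Matrix (Fin p) (Fin r) ℝ)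
    (S : Matrix (Fin r) (Fin r) ℝ)
    (hU : Uᵀ * U = 1)
    (hSdiag : ∀ i j, i ≠ j → S i j = 0)
    (hSlb : ∀ i, 1 / CS ≤ S i i)
    (hsvd : W * Gᵀ = Real.sqrt ((n : ℝ) * p) • (U * S * Vᵀ)) :
    ∀ j : Fin p,
      euclNorm ((Real.sqrt p • (V * Matrix.diagonal fun i => Real.sqrt (S i i))) j) ≤
        C ^ 2 * Real.sqrt CS := by
  intro j
  have hS : diagonal S.diag = S := IsDiag.diagonal_diag hSdiag
  have hSV : ∀ k, (S *ᵥ V j) k = S k k * V j k := fun k => by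
    rw [← hS, mulVec_diagonal, diagonal_apply_eq]
  have hS_nonneg : ∀ k, 0 ≤ S k k := fun k => le_trans (by positivity) (hSlb k)
  rw [euclNorm_le_iff _ (by positivity)]
  calc ∑ k, (Real.sqrt p • (V * diagonal fun i => Real.sqrt (S i i))) j k ^ 2
      = p * ∑ k, S k k * V j k ^ 2 := by
        simp only [Matrix.smul_apply, mul_diagonal, smul_eq_mul, mul_pow,
          Real.sq_sqrt (Nat.cast_nonneg _), Real.sq_sqrt (hS_nonneg _), Finset.mul_sum]
        exact Finset.sum_congr rfl fun k _ => by ring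
    _ ≤ p * (CS * ∑ k, (S k k * V j k) ^ 2) := by
        gcongr
        exact sum_mul_sq_le_mul_sum_sq (s := fun k => S k k) hCS hSlb
    _ = CS * (p * ∑ k, (S *ᵥ V j) k ^ 2) := by simp only [hSV]; ring
    _ ≤ CS * (C * C) ^ 2 := by
        gcongr
        exact mul_sum_sq_mulVec_row_le_of_mul_transpose_eq hW hG hU hsvd j
    _ = (C ^ 2 * Real.sqrt CS) ^ 2 := by rw [mul_pow (C ^ 2), Real.sq_sqrt hCS.le]; ring

/-- deterministic content of Lemma C.4: boundedness of the rows of the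
estimated latent loadings `Γ̂ = √p · V Σ^{1/2}` when `W Gᵀ = √(np)·U Σ Vᵀ`, the rows of
`W` and `G` have norm at most `C`, and the diagonal entries of `Σ` are at least `1/C_Σ`. -/
theorem stmt14 {n p r : ℕ} (C CS : ℝ) (hCS : 0 < CS)
    (W : Matrix (Fin n) (Fin r) ℝ) (G : Matrix (Fin p) (Fin r) ℝ)
    (hW : ∀ i, euclNorm (W i) ≤ C) (hG : ∀ j, euclNorm (G j) ≤ C)
    (U : Matrix (Fin n) (Fin r) ℝ) (V : Matrix (Fin p) (Fin r) ℝ)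
    (S : Matrix (Fin r) (Fin r) ℝ)
    (hU : Uᵀ * U = 1) (hV : Vᵀ * V = 1)
    (hSdiag : ∀ i j, i ≠ j → S i j = 0)
    (hSlb : ∀ i, 1 / CS ≤ S i i)
    (hsvd : W * Gᵀ = Real.sqrt ((n : ℝ) * p) • (U * S * Vᵀ)) :
    ∀ j : Fin p,
      euclNorm ((Real.sqrt p • (V * Matrix.diagonal fun i => Real.sqrt (S i i))) j) ≤
        C ^ 2 * Real.sqrt CS :=
  stmt14_general C CS hCS W G hW hG U V S hU hSdiag hSlb hsvd
end
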